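/- arXiv:1309.5936 — 2 statements merged into one kernel-verified Lean document; each statement's English description precedes it below -/
import Mathlib

section
/- Let 0 < p < 1 and let δ satisfy |δ| < min(p, 1-p). Then the Bernoulli Kullback–Leibler divergence satisfies |D(p || p+δ) − δ²/(2p(1−p))| ≤ (δ²/(2p(1−p))) · (2/3) · (|δ|/min(p,1−p)) · (1 − |δ|/min(p,1−p))^{−3}. -/
open Real
set_option maxHeartbeats 1000000

lemma key {x : ℝ} (hx : |x| < 1) :
    |Real.log (1 - x) + x + x ^ 2 / 2| ≤ |x| ^ 3 / (3 * (1 - |x|)) := by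
  have hs := Real.hasSum_pow_div_log_of_abs_lt_one hx
  have hsum : Summable (fun n : ℕ => x ^ (n + 1) / (n + 1)) := hs.summable
  have htail := Summable.sum_add_tsum_nat_add (f := fun n : ℕ => x ^ (n + 1) / (n + 1)) 2 hsum
  have hts : ∑' n : ℕ, x ^ (n + 1) / (n + 1) = -Real.log (1 - x) := hs.tsum_eq
  have h0 : (∑ i ∈ Finset.range 2, x ^ (i + 1) / ((i : ℝ) + 1)) = x + x ^ 2 / 2 := by
    simp [Finset.sum_range_succ]
    ring
  rw [hts] at htail
  have hid : Real.log (1 - x) + x + x ^ 2 / 2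
      = -(∑' n : ℕ, x ^ (n + 2 + 1) / ((n : ℝ) + 2 + 1)) := by
    push_cast at htail h0 ⊢
    linarith
  rw [hid, abs_neg]
  have hb : ∀ n : ℕ, |x ^ (n + 2 + 1) / ((n : ℝ) + 2 + 1)| ≤ |x| ^ 3 / 3 * |x| ^ n := by
    intro n
    rw [abs_div, abs_pow, abs_of_nonneg (by positivity : (0:ℝ) ≤ (n : ℝ) + 2 + 1)]
    calc |x| ^ (n + 2 + 1) / ((n : ℝ) + 2 + 1) ≤ |x| ^ (n + 2 + 1) / 3 := by
          gcongr
          · push_cast; linarith [Nat.cast_nonneg (α := ℝ) n]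
      _ = |x| ^ 3 / 3 * |x| ^ n := by
          rw [show n + 2 + 1 = 3 + n from by omega, pow_add]; ring
  have sg : Summable (fun n : ℕ => |x| ^ 3 / 3 * |x| ^ n) :=
    (summable_geometric_of_lt_one (abs_nonneg x) hx).mul_left _
  have hsum' : Summable (fun n : ℕ => |x ^ (n + 2 + 1) / ((n : ℝ) + 2 + 1)|) :=
    Summable.of_nonneg_of_le (fun n => abs_nonneg _) hb sg
  calc |∑' n : ℕ, x ^ (n + 2 + 1) / ((n : ℝ) + 2 + 1)|
      ≤ ∑' n : ℕ, |x ^ (n + 2 + 1) / ((n : ℝ) + 2 + 1)| := by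
        simp only [← Real.norm_eq_abs]
        exact norm_tsum_le_tsum_norm (by simpa only [Real.norm_eq_abs] using hsum')
    _ ≤ ∑' n : ℕ, |x| ^ 3 / 3 * |x| ^ n := Summable.tsum_le_tsum hb hsum' sg
    _ = |x| ^ 3 / 3 * (1 - |x|)⁻¹ := by
        rw [tsum_mul_left, tsum_geometric_of_lt_one (abs_nonneg x) hx]
    _ = |x| ^ 3 / (3 * (1 - |x|)) := by
        field_simp

/-- Bernoulli Kullback–Leibler divergence. -/
noncomputable def bernKL (p q : ℝ) : ℝ :=
  p * Real.log (p / q) + (1 - p) * Real.log ((1 - p) / (1 - q))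

theorem bernKL_taylor_bound (p δ : ℝ) (hp : p ∈ Set.Ioo (0 : ℝ) 1)
    (hδ : |δ| < min p (1 - p)) :
    |bernKL p (p + δ) - δ ^ 2 / (2 * p * (1 - p))| ≤
      δ ^ 2 / (2 * p * (1 - p)) * (2 / 3) * (|δ| / min p (1 - p)) *
        (1 - |δ| / min p (1 - p)) ^ (-3 : ℤ) := by
  obtain ⟨hp0, hp1⟩ := hp
  set a := |δ| with ha
  set m := min p (1 - p) with hm
  have hq0 : (0:ℝ) < 1 - p := by linarith
  have hm0 : 0 < m := lt_min hp0 hq0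
  have hmp : m ≤ p := min_le_left _ _
  have hmq : m ≤ 1 - p := min_le_right _ _
  have ha0 : 0 ≤ a := abs_nonneg δ
  have hap : a < p := lt_of_lt_of_le hδ hmp
  have haq : a < 1 - p := lt_of_lt_of_le hδ hmq
  have hpδ : 0 < p + δ := by
    have := neg_abs_le δ; simp only [← ha] at this; linarith
  have hqδ : 0 < 1 - p - δ := by
    have := le_abs_self δ; simp only [← ha] at this; linarith
  set x := -δ / p with hxdef
  set y := δ / (1 - p) with hydef
  have hxabs : |x| = a / p := by
    rw [hxdef, abs_div, abs_neg, abs_of_pos hp0]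
  have hyabs : |y| = a / (1 - p) := by
    rw [hydef, abs_div, abs_of_pos hq0]
  have hx1 : |x| < 1 := by rw [hxabs]; rw [div_lt_one hp0]; exact hap
  have hy1 : |y| < 1 := by rw [hyabs]; rw [div_lt_one hq0]; exact haq
  set E₁ := Real.log (1 - x) + x + x ^ 2 / 2 with hE1def
  set E₂ := Real.log (1 - y) + y + y ^ 2 / 2 with hE2def
  -- identity
  have hid : bernKL p (p + δ) - δ ^ 2 / (2 * p * (1 - p)) = -(p * E₁ + (1 - p) * E₂) := by
    have l1 : Real.log (p / (p + δ)) = Real.log p - Real.log (p + δ) :=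
      Real.log_div hp0.ne' hpδ.ne'
    have l2 : Real.log ((1 - p) / (1 - (p + δ))) = Real.log (1 - p) - Real.log (1 - p - δ) := by
      rw [show 1 - (p + δ) = 1 - p - δ by ring]
      exact Real.log_div hq0.ne' hqδ.ne'
    have l3 : Real.log (1 - x) = Real.log (p + δ) - Real.log p := by
      have hx' : 1 - x = (p + δ) / p := by
        rw [hxdef]
        field_simp
        ring
      rw [hx']
      exact Real.log_div hpδ.ne' hp0.ne'
    have l4 : Real.log (1 - y) = Real.log (1 - p - δ) - Real.log (1 - p) := by
      have hy' : 1 - y = (1 - p - δ) / (1 - p) := by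
        rw [hydef]
        field_simp
      rw [hy']
      exact Real.log_div hqδ.ne' hq0.ne'
    rw [bernKL, l1, l2, hE1def, hE2def, l3, l4, hxdef, hydef]
    field_simp
    ring
  rw [hid, abs_neg]
  have hδ2 : δ ^ 2 = a ^ 2 := (sq_abs δ).symm
  have htm0 : 0 < 1 - a / m := by
    rw [sub_pos, div_lt_one hm0]; exact hδ
  have htm1 : 1 - a / m ≤ 1 := by
    have : 0 ≤ a / m := div_nonneg ha0 hm0.le
    linarith
  have hE1 : |E₁| ≤ (a / p) ^ 3 / (3 * (1 - a / m)) := by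
    refine (key hx1).trans ?_
    rw [hxabs]
    gcongr
  have hE2 : |E₂| ≤ (a / (1 - p)) ^ 3 / (3 * (1 - a / m)) := by
    refine (key hy1).trans ?_
    rw [hyabs]
    gcongr
  have hkey : 1 / p ^ 2 + 1 / (1 - p) ^ 2 ≤ 1 / (p * (1 - p) * m) := by
    rcases le_total p (1 - p) with h | h
    · rw [hm, min_eq_left h]
      rw [div_add_div _ _ (by positivity) (by positivity), div_le_div_iff₀ (by positivity) (by positivity)]
      nlinarith [mul_nonneg (mul_nonneg (pow_pos hp0 3).le hq0.le)
        (show (0:ℝ) ≤ 1 - 2 * p by linarith)]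
    · rw [hm, min_eq_right h]
      rw [div_add_div _ _ (by positivity) (by positivity), div_le_div_iff₀ (by positivity) (by positivity)]
      nlinarith [mul_nonneg (mul_nonneg hp0.le (pow_pos hq0 3).le)
        (show (0:ℝ) ≤ 2 * p - 1 by linarith)]
  have hpne : p ≠ 0 := hp0.ne'
  have hqne : (1 - p) ≠ 0 := hq0.ne'
  have hmne : m ≠ 0 := hm0.ne'
  have htmne : (1 - a / m) ≠ 0 := htm0.ne'
  have hz : ((1 - a / m : ℝ)) ^ (-3 : ℤ) = 1 / (1 - a / m) ^ 3 := by
    rw [show (-3 : ℤ) = -(3 : ℕ) by norm_num, zpow_neg, zpow_natCast, one_div]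
  set t := 1 - a / m with htdef
  clear_value t
  calc |p * E₁ + (1 - p) * E₂| ≤ p * |E₁| + (1 - p) * |E₂| := by
        refine (abs_add_le _ _).trans ?_
        rw [abs_mul, abs_mul, abs_of_pos hp0, abs_of_pos hq0]
    _ ≤ p * ((a / p) ^ 3 / (3 * t)) + (1 - p) * ((a / (1 - p)) ^ 3 / (3 * t)) := by
        gcongr
    _ = a ^ 3 / 3 * (1 / p ^ 2 + 1 / (1 - p) ^ 2) / t := by
        field_simp
    _ ≤ a ^ 3 / 3 * (1 / (p * (1 - p) * m)) / t := by
        gcongr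
    _ ≤ a ^ 3 / 3 * (1 / (p * (1 - p) * m)) / t ^ 3 := by
        have h3 : t ^ 3 ≤ t := by
          nlinarith [mul_nonneg (mul_nonneg htm0.le (sub_nonneg.2 htm1))
            (show (0:ℝ) ≤ 1 + t by linarith)]
        exact div_le_div_of_nonneg_left (by positivity) (by positivity) h3
    _ = δ ^ 2 / (2 * p * (1 - p)) * (2 / 3) * (a / m) * t ^ (-3 : ℤ) := by
        rw [hδ2, hz]
        field_simp
end

section
/- Let μ_n → ∞ and let X_n be Poisson–Binomial with mean μ_n among n trials, with min(μ_n, n−μ_n) = ω(√(μ_n log max(μ_n, n−μ_n))). Define g(X) = μ log(μ/X) + (n−μ) log((n−μ)/(n−X)) for X ∈ {1,…,n−1} and g(X) = 0 for X ∈ {0,n}. Then E[g(X_n)] ≤ 1/2 + o(1); i.e., the rescaled KL statistic n·D(μ/n || X_n/n) truncated away from saturation has first moment asymptotically bounded by that of (1/2)χ²₁. -/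
open MeasureTheory ProbabilityTheory Filter

lemma pbkl_log_one_add_ge {u : ℝ} (hu : 0 ≤ u) : u - u^2/2 ≤ Real.log (1+u) := by
  have key : MonotoneOn (fun u : ℝ => Real.log (1+u) - u + u^2/2) (Set.Ici 0) := by
    have hder : ∀ x : ℝ, 0 < x →
        HasDerivAt (fun u : ℝ => Real.log (1+u) - u + u^2/2) ((1+x)⁻¹ - 1 + x) x := by
      intro x hx
      have h1 : HasDerivAt (fun u : ℝ => 1 + u) 1 x := by
        simpa using (hasDerivAt_id x).const_add (1:ℝ)
      have h2 : HasDerivAt (fun u : ℝ => Real.log (1+u)) ((1+x)⁻¹ * 1) x :=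
        (Real.hasDerivAt_log (by linarith)).comp x h1
      have h3 : HasDerivAt (fun u : ℝ => u^2/2) (2 * x^1 / 2) x :=
        (hasDerivAt_pow 2 x).div_const 2
      have := (h2.sub (hasDerivAt_id x)).add h3
      exact this.congr_deriv (by ring)
    apply monotoneOn_of_deriv_nonneg (convex_Ici 0)
    · apply ContinuousOn.add (ContinuousOn.sub ?_ continuousOn_id) (by fun_prop)
      apply ContinuousOn.log (by fun_prop)
      intro x hx
      simp only [Set.mem_Ici] at hx; linarith
    · intro x hx
      simp only [interior_Ici, Set.mem_Ioi] at hx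
      exact ((hder x hx).differentiableAt).differentiableWithinAt
    · intro x hx
      simp only [interior_Ici, Set.mem_Ioi] at hx
      rw [(hder x hx).deriv]
      have h1 : 0 < 1 + x := by linarith
      have h2 : (1+x)⁻¹ - 1 + x = x^2 / (1+x) := by field_simp; ring
      rw [h2]
      positivity
  rcases eq_or_lt_of_le hu with rfl | hu'
  · simp
  · have := key (Set.self_mem_Ici) (Set.mem_Ici.mpr hu) hu
    norm_num at this
    nlinarith [this]

lemma pbkl_mul_log_one_add_le {v : ℝ} (hv : 0 ≤ v) :
    (1+v) * Real.log (1+v) ≤ v + v^2/2 := by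
  have key : MonotoneOn (fun v : ℝ => v + v^2/2 - (1+v) * Real.log (1+v)) (Set.Ici 0) := by
    have hder : ∀ x : ℝ, 0 < x →
        HasDerivAt (fun v : ℝ => v + v^2/2 - (1+v) * Real.log (1+v))
          (1 + 2*x^1/2 - (1 * Real.log (1+x) + (1+x) * ((1+x)⁻¹ * 1))) x := by
      intro x hx
      have h1 : HasDerivAt (fun u : ℝ => 1 + u) 1 x := by
        simpa using (hasDerivAt_id x).const_add (1:ℝ)
      have h2 : HasDerivAt (fun u : ℝ => Real.log (1+u)) ((1+x)⁻¹ * 1) x :=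
        (Real.hasDerivAt_log (by linarith)).comp x h1
      have h3 : HasDerivAt (fun u : ℝ => u^2/2) (2 * x^1 / 2) x :=
        (hasDerivAt_pow 2 x).div_const 2
      exact ((hasDerivAt_id x).add h3).sub (h1.mul h2)
    apply monotoneOn_of_deriv_nonneg (convex_Ici 0)
    · apply ContinuousOn.sub (by fun_prop)
      apply ContinuousOn.mul (by fun_prop)
      apply ContinuousOn.log (by fun_prop)
      intro x hx
      simp only [Set.mem_Ici] at hx; linarith
    · intro x hx
      simp only [interior_Ici, Set.mem_Ioi] at hx
      exact ((hder x hx).differentiableAt).differentiableWithinAt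
    · intro x hx
      simp only [interior_Ici, Set.mem_Ioi] at hx
      rw [(hder x hx).deriv]
      have h1 : 0 < 1 + x := by linarith
      have h2 : Real.log (1+x) ≤ x := by
        have := Real.log_le_sub_one_of_pos h1
        linarith
      have h3 : (1+x) * ((1+x)⁻¹ * 1) = 1 := by field_simp
      rw [h3]
      ring_nf
      nlinarith [h2]
  rcases eq_or_lt_of_le hv with rfl | hv'
  · simp
  · have := key (Set.self_mem_Ici) (Set.mem_Ici.mpr hv) hv
    norm_num at this
    nlinarith [this]


lemma pbkl_case_ge {a x : ℝ} (ha : 0 < a) (hax : a ≤ x) :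
    a * Real.log (a / x) ≤ (a - x) + (x - a)^2 / (2*a) := by
  have hx : 0 < x := lt_of_lt_of_le ha hax
  have hu0 : 0 ≤ (x - a)/a := div_nonneg (by linarith) ha.le
  have hb := pbkl_log_one_add_ge hu0
  have h1u : 1 + (x-a)/a = x/a := by field_simp; ring
  rw [h1u] at hb
  have h3 := mul_le_mul_of_nonneg_left hb ha.le
  have e1 : a * ((x-a)/a - ((x-a)/a)^2/2) = (x-a) - (x-a)^2/(2*a) := by
    field_simp
  have e2 : Real.log (a/x) = - Real.log (x/a) := by
    rw [Real.log_div ha.ne' hx.ne', Real.log_div hx.ne' ha.ne']; ring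
  rw [e1] at h3
  rw [e2]
  linarith

lemma pbkl_case_lt {a x : ℝ} (hx : 0 < x) (hax : x ≤ a) :
    a * Real.log (a / x) ≤ (a - x) + (a - x)^2 / (2*x) := by
  have ha : 0 < a := lt_of_lt_of_le hx hax
  have hv0 : 0 ≤ (a-x)/x := div_nonneg (by linarith) hx.le
  have hb := pbkl_mul_log_one_add_le hv0
  have h1v : 1 + (a-x)/x = a/x := by field_simp; ring
  rw [h1v] at hb
  have h3 := mul_le_mul_of_nonneg_left hb hx.le
  have e1 : x * ((a-x)/x + ((a-x)/x)^2/2) = (a-x) + (a-x)^2/(2*x) := by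
    field_simp
  have e2 : x * (a/x * Real.log (a/x)) = a * Real.log (a/x) := by
    field_simp
  rw [e1, e2] at h3
  linarith

/-- Key pointwise quadratic bound on the KL summand. -/
lemma pbkl_key_log {a x t : ℝ} (ha : 0 < a) (hx : 0 < x) (hta : t < a)
    (hxt : |x - a| ≤ t) :
    a * Real.log (a / x) ≤ (a - x) + (x - a)^2 / (2*(a - t)) := by
  have hat : 0 < a - t := by linarith
  have habs := abs_le.mp hxt
  rcases le_or_gt a x with hax | hax
  · have h := pbkl_case_ge ha hax
    have h2 : (x-a)^2/(2*a) ≤ (x-a)^2/(2*(a-t)) := by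
      apply div_le_div_of_nonneg_left (sq_nonneg _) <;> linarith
    linarith
  · have h := pbkl_case_lt hx hax.le
    have h2 : (a-x)^2/(2*x) ≤ (a-x)^2/(2*(a-t)) := by
      apply div_le_div_of_nonneg_left (sq_nonneg _) <;> linarith
    have hsq : (a-x)^2 = (x-a)^2 := by ring
    rw [hsq] at h2 h
    linarith

/-- Nonnegativity of the KL expression. -/
lemma pbkl_nonneg {m b x y : ℝ} (hm : 0 < m) (hb : 0 < b) (hx : 0 < x) (hy : 0 < y)
    (hsum : x + y = m + b) :
    0 ≤ m * Real.log (m / x) + b * Real.log (b / y) := by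
  have h1 : Real.log (x / m) ≤ x / m - 1 := Real.log_le_sub_one_of_pos (by positivity)
  have h2 : Real.log (y / b) ≤ y / b - 1 := Real.log_le_sub_one_of_pos (by positivity)
  have e1 : Real.log (m / x) = - Real.log (x / m) := by
    rw [Real.log_div hm.ne' hx.ne', Real.log_div hx.ne' hm.ne']; ring
  have e2 : Real.log (b / y) = - Real.log (y / b) := by
    rw [Real.log_div hb.ne' hy.ne', Real.log_div hy.ne' hb.ne']; ring
  rw [e1, e2]
  have h3 := mul_le_mul_of_nonneg_left h1 hm.le
  have h4 := mul_le_mul_of_nonneg_left h2 hb.le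
  have e3 : m * (x/m - 1) = x - m := by field_simp
  have e4 : b * (y/b - 1) = y - b := by field_simp
  rw [e3] at h3; rw [e4] at h4
  nlinarith

/-- Cap on the KL expression for `1 ≤ x`, `1 ≤ y`. -/
lemma pbkl_cap {m b x y : ℝ} (hm : 1 ≤ m) (hb : 1 ≤ b) (hx : 1 ≤ x) (hy : 1 ≤ y) :
    m * Real.log (m / x) + b * Real.log (b / y) ≤ m * Real.log m + b * Real.log b := by
  have h1 : Real.log (m / x) ≤ Real.log m :=
    Real.log_le_log (by positivity) (div_le_self (by linarith) hx)
  have h2 : Real.log (b / y) ≤ Real.log b :=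
    Real.log_le_log (by positivity) (div_le_self (by linarith) hy)
  have := mul_le_mul_of_nonneg_left h1 (by linarith : (0:ℝ) ≤ m)
  have := mul_le_mul_of_nonneg_left h2 (by linarith : (0:ℝ) ≤ b)
  linarith

/-- A sum of 0/1-valued reals over a finset is a natural number at most the card. -/
lemma pbkl_sum01 {ι : Type*} (s : Finset ι) (f : ι → ℝ) (hf : ∀ i, f i = 0 ∨ f i = 1) :
    ∃ k : ℕ, k ≤ s.card ∧ ∑ i ∈ s, f i = k := by
  classical
  induction s using Finset.induction_on with
  | empty => exact ⟨0, by simp⟩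
  | @insert a s ha ih =>
    obtain ⟨k, hk, hsum⟩ := ih
    rcases hf a with h0 | h1
    · exact ⟨k, by simp [Finset.card_insert_of_notMem ha]; omega,
        by rw [Finset.sum_insert ha, h0, hsum]; simp⟩
    · refine ⟨k+1, ?_, ?_⟩
      · rw [Finset.card_insert_of_notMem ha]; omega
      · rw [Finset.sum_insert ha, h1, hsum]; push_cast; ring

/-- Quadratic upper bound for `exp` on `[-1,1]`. -/
lemma pbkl_exp_quad {x : ℝ} (hx : |x| ≤ 1) : Real.exp x ≤ 1 + x + x^2 := by
  have h := Real.exp_bound hx (by norm_num : 0 < 2)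
  have h2 : |Real.exp x - (1 + x)| ≤ |x|^2 * (3/4) := by
    have e : ∑ m ∈ Finset.range 2, x ^ m / m.factorial = 1 + x := by
      simp [Finset.sum_range_succ]
    rw [e] at h
    convert h using 2
    norm_num [Nat.factorial]
  have h3 := (abs_sub_le_iff.mp h2).1
  have h4 : |x|^2 = x^2 := sq_abs x
  nlinarith [sq_nonneg x]

section Prob

variable {Ω : Type*} [MeasurableSpace Ω] (P : Measure Ω) [IsProbabilityMeasure P]
  {n : ℕ} {X : Fin n → Ω → ℝ}

lemma pbkl_Xint (hmeas : ∀ i, Measurable (X i)) (h01 : ∀ i ω, X i ω = 0 ∨ X i ω = 1) :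
    ∀ i, Integrable (X i) P := by
  intro i
  refine (integrable_const (1:ℝ)).mono' (hmeas i).aestronglyMeasurable ?_
  refine ae_of_all _ fun ω => ?_
  rcases h01 i ω with h | h <;> simp [h]

lemma pbkl_p_mem (hmeas : ∀ i, Measurable (X i)) (h01 : ∀ i ω, X i ω = 0 ∨ X i ω = 1) (i : Fin n) :
    0 ≤ ∫ ω, X i ω ∂P ∧ ∫ ω, X i ω ∂P ≤ 1 := by
  constructor
  · apply integral_nonneg
    intro ω; rcases h01 i ω with h | h <;> simp [h]
  · calc ∫ ω, X i ω ∂P ≤ ∫ _, (1:ℝ) ∂P := by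
          apply integral_mono (pbkl_Xint P hmeas h01 i) (integrable_const 1)
          intro ω; rcases h01 i ω with h | h <;> simp [h]
    _ = 1 := by simp

lemma pbkl_mgf_le (hmeas : ∀ i, Measurable (X i))
    (hindep : iIndepFun X P)
    (h01 : ∀ i ω, X i ω = 0 ∨ X i ω = 1)
    (m : ℝ) (hm : m = ∑ i, ∫ ω, X i ω ∂P) (hm0 : 0 ≤ m)
    (lam : ℝ) (hlam : |lam| ≤ 1) :
    mgf (∑ i, X i) P lam ≤ Real.exp ((lam + lam^2) * m) := by
  have hmgf_i : ∀ i, mgf (X i) P lam = 1 + (Real.exp lam - 1) * ∫ ω, X i ω ∂P := by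
    intro i
    have he : (fun ω => Real.exp (lam * X i ω)) =
        fun ω => 1 + (Real.exp lam - 1) * X i ω := by
      funext ω; rcases h01 i ω with h | h <;> simp [h]
    rw [mgf, he, integral_add (integrable_const 1) (((pbkl_Xint P hmeas h01 i)).const_mul _),
      MeasureTheory.integral_const_mul, integral_const]
    simp
  have hprod := hindep.mgf_sum hmeas (t := lam) Finset.univ
  rw [hprod]
  calc (∏ i, mgf (X i) P lam)
      ≤ ∏ i, Real.exp ((Real.exp lam - 1) * ∫ ω, X i ω ∂P) := by
        apply Finset.prod_le_prod
        · intro i _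
          rw [hmgf_i i]
          obtain ⟨hp0, hp1⟩ := pbkl_p_mem P hmeas h01 i
          nlinarith [Real.exp_pos lam]
        · intro i _
          rw [hmgf_i i]
          have := Real.add_one_le_exp ((Real.exp lam - 1) * ∫ ω, X i ω ∂P)
          linarith
    _ = Real.exp (∑ i, (Real.exp lam - 1) * ∫ ω, X i ω ∂P) := (Real.exp_sum _ _).symm
    _ ≤ Real.exp ((lam + lam^2) * m) := by
        apply Real.exp_le_exp.mpr
        rw [← Finset.mul_sum, ← hm]
        apply mul_le_mul_of_nonneg_right _ hm0
        have := pbkl_exp_quad hlam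
        linarith

end Prob

section Prob2

variable {Ω : Type*} [MeasurableSpace Ω] (P : Measure Ω) [IsProbabilityMeasure P]
  {n : ℕ} {X : Fin n → Ω → ℝ}

lemma pbkl_Smeas (hmeas : ∀ i, Measurable (X i)) {S : Ω → ℝ} (hS : ∀ ω, S ω = ∑ i, X i ω) :
    Measurable S := by
  have : S = fun ω => ∑ i, X i ω := funext hS
  rw [this]
  exact Finset.measurable_sum _ fun i _ => hmeas i

lemma pbkl_S_range (h01 : ∀ i ω, X i ω = 0 ∨ X i ω = 1) {S : Ω → ℝ}
    (hS : ∀ ω, S ω = ∑ i, X i ω) (ω : Ω) : 0 ≤ S ω ∧ S ω ≤ n := by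
  obtain ⟨k, hk, hsum⟩ := pbkl_sum01 Finset.univ (fun i => X i ω) (fun i => h01 i ω)
  rw [hS ω, hsum]
  simp only [Finset.card_univ, Fintype.card_fin] at hk
  constructor
  · positivity
  · exact_mod_cast hk

lemma pbkl_exp_int (hmeas : ∀ i, Measurable (X i)) (h01 : ∀ i ω, X i ω = 0 ∨ X i ω = 1)
    {S : Ω → ℝ} (hS : ∀ ω, S ω = ∑ i, X i ω) (c : ℝ) :
    Integrable (fun ω => Real.exp (c * S ω)) P := by
  refine (integrable_const (Real.exp (|c| * n))).mono'
    (((pbkl_Smeas hmeas hS).const_mul c).exp).aestronglyMeasurable ?_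
  refine ae_of_all _ fun ω => ?_
  obtain ⟨h0, hn⟩ := pbkl_S_range h01 hS ω
  rw [Real.norm_eq_abs, Real.abs_exp, Real.exp_le_exp]
  calc c * S ω ≤ |c * S ω| := le_abs_self _
    _ = |c| * S ω := by rw [abs_mul, abs_of_nonneg h0]
    _ ≤ |c| * n := by apply mul_le_mul_of_nonneg_left hn (abs_nonneg c)

lemma pbkl_chernoff (hmeas : ∀ i, Measurable (X i))
    (hindep : iIndepFun X P)
    (h01 : ∀ i ω, X i ω = 0 ∨ X i ω = 1)
    {S : Ω → ℝ} (hS : ∀ ω, S ω = ∑ i, X i ω)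
    (m : ℝ) (hm : m = ∑ i, ∫ ω, X i ω ∂P) (hm0 : 0 < m)
    (t : ℝ) (ht0 : 0 < t) (htm : t ≤ m) :
    (P {ω | t < |S ω - m|}).toReal ≤ 2 * Real.exp (-(t^2)/(4*m)) := by
  have hSfun : S = ∑ i, X i := by
    funext ω; rw [hS]; simp [Finset.sum_apply]
  set lam := t/(2*m) with hlam_def
  have hlam0 : 0 < lam := by positivity
  have hlam1 : lam ≤ 1/2 := by
    rw [hlam_def, div_le_iff₀ (by linarith : (0:ℝ) < 2*m)]
    linarith
  have hlam_abs : |lam| ≤ 1 := by rw [abs_of_pos hlam0]; linarith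
  have hlam_abs' : |(-lam)| ≤ 1 := by rw [abs_neg]; exact hlam_abs
  have hmgf1 : mgf S P lam ≤ Real.exp ((lam + lam^2) * m) := by
    rw [hSfun]; exact pbkl_mgf_le P hmeas hindep h01 m hm hm0.le lam hlam_abs
  have hmgf2 : mgf S P (-lam) ≤ Real.exp ((-lam + (-lam)^2) * m) := by
    rw [hSfun]; exact pbkl_mgf_le P hmeas hindep h01 m hm hm0.le (-lam) hlam_abs'
  have hup : (P {ω | m + t ≤ S ω}).toReal ≤ Real.exp (-(t^2)/(4*m)) := by
    calc (P {ω | m + t ≤ S ω}).toReal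
        ≤ Real.exp (-lam * (m+t)) * mgf S P lam :=
          measure_ge_le_exp_mul_mgf (m+t) hlam0.le (pbkl_exp_int P hmeas h01 hS lam)
      _ ≤ Real.exp (-lam * (m+t)) * Real.exp ((lam + lam^2) * m) := by
          apply mul_le_mul_of_nonneg_left hmgf1 (Real.exp_pos _).le
      _ = Real.exp ((lam + lam^2) * m + (-lam * (m+t))) := by
          rw [← Real.exp_add]; ring_nf
      _ = Real.exp (-(t^2)/(4*m)) := by
          congr 1
          rw [hlam_def]; field_simp; ring
  have hlo : (P {ω | S ω ≤ m - t}).toReal ≤ Real.exp (-(t^2)/(4*m)) := by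
    calc (P {ω | S ω ≤ m - t}).toReal
        ≤ Real.exp (-(-lam) * (m-t)) * mgf S P (-lam) :=
          measure_le_le_exp_mul_mgf (m-t) (by linarith) (pbkl_exp_int P hmeas h01 hS (-lam))
      _ ≤ Real.exp (lam * (m-t)) * Real.exp ((-lam + (-lam)^2) * m) := by
          rw [neg_neg]
          apply mul_le_mul_of_nonneg_left hmgf2 (Real.exp_pos _).le
      _ = Real.exp ((-lam + lam^2) * m + lam * (m-t)) := by
          rw [← Real.exp_add]; ring_nf
      _ = Real.exp (-(t^2)/(4*m)) := by
          congr 1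
          rw [hlam_def]; field_simp; ring
  have hsub : {ω | t < |S ω - m|} ⊆ {ω | m + t ≤ S ω} ∪ {ω | S ω ≤ m - t} := by
    intro ω hω
    simp only [Set.mem_setOf_eq] at hω
    rcases abs_cases (S ω - m) with ⟨he, _⟩ | ⟨he, _⟩
    · left; simp only [Set.mem_setOf_eq]; rw [he] at hω; linarith
    · right; simp only [Set.mem_setOf_eq]; rw [he] at hω; linarith
  have hmono : P {ω | t < |S ω - m|} ≤ P ({ω | m + t ≤ S ω} ∪ {ω | S ω ≤ m - t}) := measure_mono hsub
  have hunion : P ({ω | m + t ≤ S ω} ∪ {ω | S ω ≤ m - t}) ≤ P {ω | m + t ≤ S ω} + P {ω | S ω ≤ m - t} := measure_union_le _ _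
  have h1 : (P {ω | t < |S ω - m|}).toReal ≤
      (P {ω | m + t ≤ S ω} + P {ω | S ω ≤ m - t}).toReal := by
    apply ENNReal.toReal_mono _ (hmono.trans hunion)
    exact ENNReal.add_ne_top.mpr ⟨measure_ne_top _ _, measure_ne_top _ _⟩
  rw [ENNReal.toReal_add (measure_ne_top _ _) (measure_ne_top _ _)] at h1
  linarith

end Prob2

section Prob3

variable {Ω : Type*} [MeasurableSpace Ω] (P : Measure Ω) [IsProbabilityMeasure P]
  {n : ℕ} {X : Fin n → Ω → ℝ}

lemma pbkl_var (hmeas : ∀ i, Measurable (X i))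
    (hindep : iIndepFun X P)
    (h01 : ∀ i ω, X i ω = 0 ∨ X i ω = 1)
    {S : Ω → ℝ} (hS : ∀ ω, S ω = ∑ i, X i ω)
    (m : ℝ) (hm : m = ∑ i, ∫ ω, X i ω ∂P) (hn : 0 < n) :
    ∫ ω, (S ω - m)^2 ∂P ≤ m * ((n:ℝ) - m) / n := by
  have hSfun : S = ∑ i, X i := by
    funext ω; rw [hS]; simp [Finset.sum_apply]
  have hℒ : ∀ i, MemLp (X i) 2 P := by
    intro i
    refine memLp_of_bounded (a := 0) (b := 1) (ae_of_all _ fun ω => ?_)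
      (hmeas i).aestronglyMeasurable 2
    rcases h01 i ω with h | h <;> simp [h, Set.mem_Icc] <;> norm_num
  have hℒS : MemLp S 2 P := by
    refine memLp_of_bounded (a := 0) (b := n) (ae_of_all _ fun ω => ?_)
      (pbkl_Smeas hmeas hS).aestronglyMeasurable 2
    exact Set.mem_Icc.mpr (pbkl_S_range h01 hS ω)
  have hmS : ∫ ω, S ω ∂P = m := by
    rw [hm]
    calc ∫ ω, S ω ∂P = ∫ ω, ∑ i, X i ω ∂P := by simp [hS]
      _ = ∑ i, ∫ ω, X i ω ∂P := integral_finset_sum _ fun i _ => pbkl_Xint P hmeas h01 i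
  have hvar_i : ∀ i, variance (X i) P = (∫ ω, X i ω ∂P) - (∫ ω, X i ω ∂P)^2 := by
    intro i
    rw [variance_eq_sub (hℒ i)]
    have e : X i ^ 2 = X i := by
      funext ω; rcases h01 i ω with h | h <;> simp [h]
    rw [e]
  have hvS : variance S P = m - ∑ i, (∫ ω, X i ω ∂P)^2 := by
    rw [hSfun, IndepFun.variance_sum (fun i _ => hℒ i)
      (fun i _ j _ hij => hindep.indepFun hij),
      Finset.sum_congr rfl fun i _ => hvar_i i, Finset.sum_sub_distrib, ← hm]
  have hsq : Integrable (fun ω => S ω^2) P := by simpa using hℒS.integrable_sq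
  have hint1 : Integrable S P := hℒS.integrable one_le_two
  have hint : ∫ ω, (S ω - m)^2 ∂P = variance S P := by
    rw [variance_eq_sub hℒS, hmS]
    have i1 : Integrable (fun ω => S ω^2 - 2*m*S ω) P := hsq.sub (hint1.const_mul (2*m))
    calc ∫ ω, (S ω - m)^2 ∂P = ∫ ω, (S ω^2 - 2*m*S ω + m^2) ∂P := by
          congr 1; funext ω; ring
      _ = (∫ ω, (S ω^2 - 2*m*S ω) ∂P) + m^2 := by
          rw [integral_add i1 (integrable_const _), integral_const]
          simp
      _ = (∫ ω, S ω^2 ∂P) - 2*m*(∫ ω, S ω ∂P) + m^2 := by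
          rw [integral_sub hsq (hint1.const_mul (2*m)), MeasureTheory.integral_const_mul]
      _ = ∫ ω, (S^2) ω ∂P - m^2 := by
          rw [hmS]
          simp only [Pi.pow_apply]
          ring
  have hcs : m^2 ≤ (n:ℝ) * ∑ i, (∫ ω, X i ω ∂P)^2 := by
    have h := sq_sum_le_card_mul_sum_sq (s := (Finset.univ : Finset (Fin n)))
      (f := fun i : Fin n => ∫ ω, X i ω ∂P)
    rw [← hm] at h
    simpa [Finset.card_univ] using h
  rw [hint, hvS]
  have hn' : (0:ℝ) < n := by exact_mod_cast hn
  have h3 : m^2/(n:ℝ) ≤ ∑ i, (∫ ω, X i ω ∂P)^2 := by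
    rw [div_le_iff₀ hn']
    nlinarith [hcs]
  have h2 : m * ((n:ℝ) - m) / n = m - m^2/n := by field_simp
  rw [h2]
  linarith

end Prob3

lemma pbkl_lin1 {s m mn t : ℝ} (hs0 : 0 ≤ s) (hmmn : mn ≤ m) (hts : t ≤ s * mn) :
    (1-s)*m ≤ m - t := by nlinarith

lemma pbkl_lin2 {s : ℝ} (h0 : 0 < s) (h2 : s ≤ 1/2) : 1/(2*(1-s)) ≤ 1/2 + s := by
  rw [div_le_iff₀ (by linarith)]
  nlinarith

lemma pbkl_lin3 {r L c : ℝ} (hr0 : 8 ≤ r) (hL1 : 1 ≤ L) (hlogL : Real.log L ≤ L)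
    (hr2 : 8 + 4*c ≤ r) :
    L + Real.log L - r*L/4 ≤ -c := by
  have e2 : (2 - r/4) * L ≤ (2 - r/4) * 1 := by nlinarith
  nlinarith

set_option maxHeartbeats 1000000 in
lemma pbkl_core {Ω : Type*} [MeasurableSpace Ω] (P : Measure Ω) [IsProbabilityMeasure P]
    (n : ℕ) (X : Fin n → Ω → ℝ)
    (hmeas : ∀ i, Measurable (X i))
    (hindep : iIndepFun X P)
    (h01 : ∀ i ω, X i ω = 0 ∨ X i ω = 1)
    (S : Ω → ℝ) (hS : ∀ ω, S ω = ∑ i, X i ω)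
    (m : ℝ) (hm : m = ∫ ω, S ω ∂P)
    (g : ℝ → ℝ)
    (hg : ∀ x, g x = if x = 0 ∨ x = (n : ℝ) then 0 else
      m * Real.log (m / x) + ((n : ℝ) - m) * Real.log (((n:ℝ) - m) / ((n:ℝ) - x)))
    (ε s : ℝ) (hε : 0 < ε) (hs0 : 0 < s) (hs2 : s ≤ 1/2) (hsε : s ≤ ε/2)
    (hm3 : 3 ≤ m)
    (hr1 : 1/s^2 ≤ min m ((n:ℝ) - m) / Real.sqrt (m * Real.log (max m ((n:ℝ) - m))))
    (hr0 : 8 ≤ min m ((n:ℝ) - m) / Real.sqrt (m * Real.log (max m ((n:ℝ) - m))))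
    (hr2 : 8 + 4*Real.log (8/ε) ≤
      min m ((n:ℝ) - m) / Real.sqrt (m * Real.log (max m ((n:ℝ) - m)))) :
    (∫ ω, g (S ω) ∂P) ≤ 1/2 + ε := by
  have hm0 : (0:ℝ) < m := by linarith
  have hm1 : (1:ℝ) ≤ m := by linarith
  set b : ℝ := (n:ℝ) - m with hb_def
  set mn : ℝ := min m b with hmn_def
  set Mx : ℝ := max m b with hMx_def
  set L : ℝ := Real.log Mx with hL_def
  set sq : ℝ := Real.sqrt (m * L) with hsq_def
  have hMx_m : m ≤ Mx := le_max_left _ _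
  have hMx3 : (3:ℝ) ≤ Mx := le_trans hm3 hMx_m
  have hMx0 : (0:ℝ) < Mx := by linarith
  have hL1 : (1:ℝ) ≤ L := by
    rw [hL_def, Real.le_log_iff_exp_le hMx0]
    have := Real.exp_one_lt_d9
    linarith
  have hL0 : (0:ℝ) < L := by linarith
  have hsq0 : (0:ℝ) < sq := Real.sqrt_pos.mpr (mul_pos hm0 hL0)
  have hr_pos : (0:ℝ) < mn / sq := lt_of_lt_of_le (div_pos one_pos (pow_pos hs0 2)) hr1
  have hmn0 : (0:ℝ) < mn := by
    have h := mul_pos hr_pos hsq0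
    rwa [div_mul_cancel₀ _ hsq0.ne'] at h
  have hbmn : mn ≤ b := min_le_right _ _
  have hmmn : mn ≤ m := min_le_left _ _
  have hb0 : (0:ℝ) < b := lt_of_lt_of_le hmn0 hbmn
  have hNm : m < (n:ℝ) := by rw [hb_def] at hb0; linarith
  have hn0 : 0 < n := by
    by_contra h
    push_neg at h
    interval_cases n
    simp at hNm
    linarith
  -- sq ≤ s^2 * mn
  have hkey : sq ≤ s^2 * mn := by
    rw [div_le_div_iff₀ (by positivity) hsq0] at hr1
    nlinarith [hr1]
  have hsq1 : (1:ℝ) ≤ sq := by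
    rw [hsq_def]
    rw [show (1:ℝ) = Real.sqrt 1 by simp]
    apply Real.sqrt_le_sqrt
    have h31 : (3:ℝ)*1 ≤ m*L := mul_le_mul hm3 hL1 one_pos.le (by linarith)
    linarith
  have hs4 : s^2 ≤ 1/4 := by nlinarith
  have hmn4 : (4:ℝ) ≤ mn := by
    have h1 : 1 ≤ s^2 * mn := le_trans hsq1 hkey
    nlinarith [mul_le_mul_of_nonneg_right hs4 hmn0.le]
  have hb1 : (1:ℝ) ≤ b := by linarith
  set t : ℝ := Real.sqrt (mn * sq) with ht_def
  have ht2 : t^2 = mn * sq := Real.sq_sqrt (mul_pos hmn0 hsq0).le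
  have ht0 : (0:ℝ) < t := Real.sqrt_pos.mpr (mul_pos hmn0 hsq0)
  have hts : t ≤ s * mn := by
    rw [ht_def]
    rw [show s * mn = Real.sqrt ((s*mn)^2) by
      rw [Real.sqrt_sq (mul_nonneg hs0.le hmn0.le)]]
    apply Real.sqrt_le_sqrt
    nlinarith [mul_le_mul_of_nonneg_left hkey hmn0.le]
  have htmn2 : t ≤ mn/2 := by nlinarith [hts, hmn0]
  have htm : t < m := by linarith
  have htb : t < b := by linarith
  have hmt0 : (0:ℝ) < m - t := by linarith
  have hbt0 : (0:ℝ) < b - t := by linarith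
  -- ingredients
  have hmp : m = ∑ i, ∫ ω, X i ω ∂P := by
    rw [hm]
    calc ∫ ω, S ω ∂P = ∫ ω, ∑ i, X i ω ∂P := by simp [hS]
      _ = ∑ i, ∫ ω, X i ω ∂P := integral_finset_sum _ fun i _ => pbkl_Xint P hmeas h01 i
  have htail := pbkl_chernoff P hmeas hindep h01 hS m hmp hm0 t ht0 (by linarith)
  have hvar := pbkl_var P hmeas hindep h01 hS m hmp hn0
  have hSmeas := pbkl_Smeas hmeas hS
  set A : Set Ω := {ω | t < |S ω - m|} with hA_def
  have hAmeas : MeasurableSet A :=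
    measurableSet_lt measurable_const ((hSmeas.sub measurable_const).abs)
  set c : ℝ := (1/2) * (1/(m-t) + 1/(b-t)) with hc_def
  have hc0 : (0:ℝ) ≤ c := by
    rw [hc_def]
    have := one_div_nonneg.mpr hmt0.le
    have := one_div_nonneg.mpr hbt0.le
    linarith
  set G : ℝ := m * Real.log m + b * Real.log b with hG_def
  have hlogm0 : (0:ℝ) ≤ Real.log m := Real.log_nonneg hm1
  have hlogb0 : (0:ℝ) ≤ Real.log b := Real.log_nonneg hb1
  have hG0 : (0:ℝ) ≤ G := by
    rw [hG_def]
    have := mul_nonneg hm0.le hlogm0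
    have := mul_nonneg hb0.le hlogb0
    linarith
  clear_value b mn Mx L sq t A c G
  -- cap and nonnegativity of g ∘ S
  have hcap : ∀ ω, 0 ≤ g (S ω) ∧ g (S ω) ≤ G := by
    intro ω
    obtain ⟨k, hk, hsum⟩ := pbkl_sum01 Finset.univ (fun i => X i ω) (fun i => h01 i ω)
    have hxk : S ω = k := by
      rw [hS ω]
      simpa using hsum
    have hk' : k ≤ n := by simpa using hk
    rcases Nat.eq_zero_or_pos k with rfl | hk1
    · rw [hg, if_pos (Or.inl (by rw [hxk]; simp))]
      exact ⟨le_refl 0, hG0⟩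
    rcases eq_or_lt_of_le hk' with rfl | hkn
    · rw [hg, if_pos (Or.inr (by rw [hxk]))]
      exact ⟨le_refl 0, hG0⟩
    · have hx1 : (1:ℝ) ≤ S ω := by rw [hxk]; exact_mod_cast hk1
      have hkn' : k + 1 ≤ n := hkn
      have hxN1 : S ω ≤ (n:ℝ) - 1 := by
        rw [hxk]
        have : ((k:ℝ) + 1) ≤ (n:ℝ) := by exact_mod_cast hkn'
        linarith
      have hx0 : (0:ℝ) < S ω := by linarith
      have hNx1 : (1:ℝ) ≤ (n:ℝ) - S ω := by linarith
      have hNx0 : (0:ℝ) < (n:ℝ) - S ω := by linarith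
      rw [hg, if_neg (by push_neg; exact ⟨ne_of_gt hx0, by intro h; rw [h] at hxN1; linarith⟩)]
      constructor
      · exact pbkl_nonneg hm0 hb0 hx0 hNx0 (by rw [hb_def]; ring)
      · rw [hG_def]; exact pbkl_cap hm1 hb1 hx1 hNx1
  -- pointwise domination
  have hpt : ∀ ω, g (S ω) ≤ c * (S ω - m)^2 + Set.indicator A (fun _ => G) ω := by
    intro ω
    by_cases hA : ω ∈ A
    · rw [Set.indicator_of_mem hA]
      have h1 := (hcap ω).2
      linarith only [h1, mul_nonneg hc0 (sq_nonneg (S ω - m))]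
    · rw [Set.indicator_of_notMem hA]
      have habs : |S ω - m| ≤ t := by
        rw [hA_def] at hA
        simpa using not_lt.mp (by simpa using hA)
      have habs' := abs_le.mp habs
      have hx0 : (0:ℝ) < S ω := by linarith
      have hxN : S ω < (n:ℝ) := by rw [hb_def] at htb; linarith
      have hNx0 : (0:ℝ) < (n:ℝ) - S ω := by linarith
      rw [hg, if_neg (by push_neg; exact ⟨ne_of_gt hx0, ne_of_lt hxN⟩)]
      have h1 := pbkl_key_log hm0 hx0 htm habs
      have habs2 : |((n:ℝ) - S ω) - b| ≤ t := by
        rw [hb_def]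
        rw [show ((n:ℝ) - S ω) - ((n:ℝ) - m) = -(S ω - m) by ring, abs_neg]
        exact habs
      have h2 := pbkl_key_log hb0 hNx0 htb habs2
      have e1 : (((n:ℝ) - S ω) - b)^2 = (S ω - m)^2 := by rw [hb_def]; ring
      have e2 : b - ((n:ℝ) - S ω) = S ω - m := by rw [hb_def]; ring
      rw [e1, e2] at h2
      have e3 : c * (S ω - m)^2 =
          (S ω - m)^2/(2*(m-t)) + (S ω - m)^2/(2*(b-t)) := by
        rw [hc_def]; field_simp
      rw [e3]
      linarith only [h1, h2]
  -- measurability and integrability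
  have hgmeas : Measurable fun ω => g (S ω) := by
    have hfe : (fun ω => g (S ω)) = fun ω =>
        if S ω = 0 ∨ S ω = (n:ℝ) then 0 else
          m * Real.log (m / S ω) + b * Real.log (b / ((n:ℝ) - S ω)) :=
      funext fun ω => hg (S ω)
    rw [hfe]
    have hcond : MeasurableSet {ω | S ω = 0 ∨ S ω = (n:ℝ)} := by
      have : {ω | S ω = 0 ∨ S ω = (n:ℝ)} = S ⁻¹' {0} ∪ S ⁻¹' {(n:ℝ)} := by
        ext ω; simp [Set.mem_preimage]
      rw [this]
      exact (hSmeas (measurableSet_singleton 0)).union (hSmeas (measurableSet_singleton _))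
    exact Measurable.ite hcond measurable_const
      (((Real.measurable_log.comp (measurable_const.div hSmeas)).const_mul m).add
        ((Real.measurable_log.comp (measurable_const.div (measurable_const.sub hSmeas))).const_mul _))
  have hgint : Integrable (fun ω => g (S ω)) P := by
    refine (integrable_const G).mono' hgmeas.aestronglyMeasurable (ae_of_all _ fun ω => ?_)
    rw [Real.norm_eq_abs, abs_le]
    exact ⟨by linarith [(hcap ω).1], (hcap ω).2⟩
  have hℒS : MemLp S 2 P := by
    refine memLp_of_bounded (a := 0) (b := n) (ae_of_all _ fun ω => ?_)
      hSmeas.aestronglyMeasurable 2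
    exact Set.mem_Icc.mpr (pbkl_S_range h01 hS ω)
  have i2 : Integrable (fun ω => (S ω - m)^2) P := by
    have := (hℒS.sub (memLp_const m)).integrable_sq
    simpa using this
  have irhs1 : Integrable (fun ω => c * (S ω - m)^2) P := i2.const_mul c
  have irhs2 : Integrable (Set.indicator A (fun _ => G)) P :=
    (integrable_const G).indicator hAmeas
  have hle : ∫ ω, g (S ω) ∂P ≤
      ∫ ω, (c * (S ω - m)^2 + Set.indicator A (fun _ => G) ω) ∂P :=
    integral_mono hgint (irhs1.add irhs2) hpt
  have heval : ∫ ω, (c * (S ω - m)^2 + Set.indicator A (fun _ => G) ω) ∂P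
      = c * (∫ ω, (S ω - m)^2 ∂P) + (P A).toReal * G := by
    rw [integral_add irhs1 irhs2, MeasureTheory.integral_const_mul,
      integral_indicator_const _ hAmeas]
    simp [smul_eq_mul]
    exact Or.inl rfl
  -- central term
  have hcentral : c * (∫ ω, (S ω - m)^2 ∂P) ≤ 1/2 + s := by
    have hVar0 : 0 ≤ ∫ ω, (S ω - m)^2 ∂P := integral_nonneg fun ω => sq_nonneg _
    have step1 : c * (∫ ω, (S ω - m)^2 ∂P) ≤ c * (m * b / n) := by
      apply mul_le_mul_of_nonneg_left _ hc0
      rw [hb_def]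
      exact hvar
    refine step1.trans ?_
    have hs1 : (0:ℝ) < 1 - s := by linarith
    have hmt : (1-s)*m ≤ m - t := pbkl_lin1 hs0.le hmmn hts
    have hbt : (1-s)*b ≤ b - t := pbkl_lin1 hs0.le hbmn hts
    have h1 : 1/(m-t) ≤ 1/((1-s)*m) := one_div_le_one_div_of_le (mul_pos hs1 hm0) hmt
    have h2 : 1/(b-t) ≤ 1/((1-s)*b) := one_div_le_one_div_of_le (mul_pos hs1 hb0) hbt
    have hc' : c ≤ 1/2 * (1/((1-s)*m) + 1/((1-s)*b)) := by
      rw [hc_def]; linarith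
    have hVn : (0:ℝ) ≤ m*b/n := div_nonneg (mul_nonneg hm0.le hb0.le) (Nat.cast_nonneg n)
    calc c * (m*b/n) ≤ (1/2 * (1/((1-s)*m) + 1/((1-s)*b))) * (m*b/n) :=
          mul_le_mul_of_nonneg_right hc' hVn
      _ = 1/(2*(1-s)) := by
          rw [show ((n:ℝ)) = m + b by rw [hb_def]; ring]
          have hmb : m + b ≠ 0 := ne_of_gt (by linarith)
          field_simp [hm0.ne', hb0.ne', hs1.ne', hmb]
          ring
      _ ≤ 1/2 + s := pbkl_lin2 hs0 hs2
  -- tail term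
  have htail2 : (P A).toReal * G ≤ ε / 2 := by
    have hGM : G ≤ 2 * Mx * L := by
      have hbMx : b ≤ Mx := by rw [hMx_def]; exact le_max_right _ _
      have e1 : m * Real.log m ≤ Mx * L := by
        rw [hL_def]
        exact mul_le_mul hMx_m (Real.log_le_log hm0 hMx_m) hlogm0 hMx0.le
      have e2 : b * Real.log b ≤ Mx * L := by
        rw [hL_def]
        exact mul_le_mul hbMx (Real.log_le_log hb0 hbMx) hlogb0 hMx0.le
      rw [hG_def]; linarith
    have hsq2 : sq^2 = m*L := hsq_def ▸ Real.sq_sqrt (mul_pos hm0 hL0).le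
    have hexp : t^2/(4*m) = (mn/sq) * L / 4 := by
      rw [ht2, div_mul_eq_mul_div, div_div,
        div_eq_div_iff (by linarith : (0:ℝ) < 4*m).ne' (by linarith : (0:ℝ) < sq*4).ne']
      linear_combination (4*mn)*hsq2
    have hPA : (P A).toReal ≤ 2 * Real.exp (-((mn/sq) * L / 4)) := by
      have he : -((mn/sq) * L / 4) = -t^2/(4*m) := by rw [← hexp]; ring
      rw [he]
      exact htail
    have hPA0 : 0 ≤ (P A).toReal := ENNReal.toReal_nonneg
    calc (P A).toReal * G ≤ (2 * Real.exp (-((mn/sq) * L / 4))) * (2 * Mx * L) := by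
          apply mul_le_mul hPA hGM hG0 (by positivity)
      _ = 4 * (Mx * L) * Real.exp (-((mn/sq) * L / 4)) := by ring
      _ = 4 * Real.exp (L + Real.log L - (mn/sq) * L / 4) := by
          have hMxL : Mx * L = Real.exp (L + Real.log L) := by
            rw [Real.exp_add, hL_def, Real.exp_log hMx0, ← hL_def, Real.exp_log hL0]
          have he2 : Real.exp (L + Real.log L) * Real.exp (-((mn/sq) * L / 4))
              = Real.exp (L + Real.log L - (mn/sq) * L / 4) := by
            rw [← Real.exp_add]; ring_nf
          rw [hMxL, mul_assoc, he2]
      _ ≤ 4 * Real.exp (-Real.log (8/ε)) := by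
          have hlogL : Real.log L ≤ L := by
            linarith [Real.log_le_sub_one_of_pos hL0]
          apply mul_le_mul_of_nonneg_left _ (by norm_num : (0:ℝ) ≤ 4)
          apply Real.exp_le_exp.mpr
          exact pbkl_lin3 hr0 hL1 hlogL hr2
      _ = 4 * (ε/8) := by
          rw [Real.exp_neg, Real.exp_log (div_pos (by norm_num) hε), inv_div]
      _ = ε / 2 := by ring
  calc ∫ ω, g (S ω) ∂P ≤ c * (∫ ω, (S ω - m)^2 ∂P) + (P A).toReal * G := by
        rw [← heval]; exact hle
    _ ≤ (1/2 + s) + ε/2 := add_le_add hcentral htail2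
    _ ≤ 1/2 + ε := by linarith

/-- First-moment control of the truncated, rescaled Kullback–Leibler statistic of a
Poisson–Binomial variate: if `μ_ν → ∞` and
`min(μ_ν, n_ν − μ_ν) = ω(√(μ_ν log max(μ_ν, n_ν − μ_ν)))`, then
`E[g(X_ν)] ≤ 1/2 + o(1)`, where `g(X) = μ log(μ/X) + (n−μ) log((n−μ)/(n−X))` for
`X ∉ {0, n}` and `g = 0` at saturation. -/
theorem poisson_binomial_KL_first_moment
    {Ω : Type*} [MeasurableSpace Ω] (P : Measure Ω) [IsProbabilityMeasure P]
    (n : ℕ → ℕ) (X : ∀ ν : ℕ, Fin (n ν) → Ω → ℝ)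
    (hmeas : ∀ ν i, Measurable (X ν i))
    (hindep : ∀ ν, iIndepFun (X ν) P)
    (h01 : ∀ ν i ω, X ν i ω = 0 ∨ X ν i ω = 1)
    (S : ℕ → Ω → ℝ) (hS : ∀ ν ω, S ν ω = ∑ i, X ν i ω)
    (m : ℕ → ℝ) (hm : ∀ ν, m ν = ∫ ω, S ν ω ∂P)
    (hmtop : Tendsto m atTop atTop)
    (hrate : Tendsto (fun ν => min (m ν) ((n ν : ℝ) - m ν) /
      Real.sqrt (m ν * Real.log (max (m ν) ((n ν : ℝ) - m ν)))) atTop atTop)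
    (g : ℕ → ℝ → ℝ)
    (hg : ∀ ν x, g ν x = if x = 0 ∨ x = (n ν : ℝ) then 0 else
      m ν * Real.log (m ν / x) +
        ((n ν : ℝ) - m ν) * Real.log (((n ν : ℝ) - m ν) / ((n ν : ℝ) - x))) :
    ∀ ε : ℝ, 0 < ε → ∀ᶠ ν in atTop, (∫ ω, g ν (S ν ω) ∂P) ≤ 1 / 2 + ε := by
  intro ε hε
  set s : ℝ := min (1/2) (ε/2) with hs_def
  have hs0 : 0 < s := lt_min (by norm_num) (by linarith)
  have hs2 : s ≤ 1/2 := min_le_left _ _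
  have hsε : s ≤ ε/2 := min_le_right _ _
  set K : ℝ := max (1/s^2) (max 8 (8 + 4*Real.log (8/ε))) with hK_def
  have h1 := hrate.eventually_ge_atTop K
  have h2 := hmtop.eventually_ge_atTop 3
  filter_upwards [h1, h2] with ν hK3 hm3
  exact pbkl_core P (n ν) (X ν) (hmeas ν) (hindep ν) (h01 ν) (S ν) (hS ν) (m ν) (hm ν)
    (g ν) (hg ν) ε s hε hs0 hs2 hsε hm3
    (le_trans (le_max_left _ _) hK3)
    (le_trans (le_trans (le_max_left _ _) (le_max_right _ _)) hK3)
    (le_trans (le_trans (le_max_right _ _) (le_max_right _ _)) hK3)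
end
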